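/- Fix a positive integer t and real numbers a_1 < … < a_t and b_1 < … < b_t with a_i ≤ b_i for every i, such that all the differences a_i − a_j, b_i − b_j, a_i − b_j are integers; assume a_1 ≥ 1/2. Let α be a real number with α − a_1 ∈ ℤ. Let c_1 < c_2 < … < c_t be real numbers with a_i − 1 ≤ c_i ≤ b_i and c_i − a_i ∈ ℤ for every i. Let J = {i ∈ {1,…,t} : c_i < b_i}, suppose J is nonempty, put s = |J|, and suppose that {c_i + 1 : i ∈ J} = {α − s + 1, α − s + 2, …, α}. Then, with k = max J, one has: J is exactly the interval of indices {k − s + 1, k − s + 2, …, k}; c_i = α − k + i − 1 for every i ∈ J; a_k ≤ α ≤ b_k; and k − s + 1 equals the least index i with α − k + i ≤ b_i (i.e. k − s + 1 = k_m). -/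

import Mathlib

/-!
Integrality turns the strict increase of `c` into `c j - c i ≥ j - i`. On `J` the values
`c i` lie in `[α - s, α - 1]`, and `c k = α - 1` since `α` is attained and `k = max J`. Hence
every `i ∈ J` satisfies `k - i ≤ s - 1`, so `J ⊆ [k - s + 1, k]`, with equality by counting;
the two gap estimates from `k - s + 1` and to `k` then pin down `c` on `J`. Below `k - s + 1`
the residual segments are empty, `b m = c m`, and the gap estimate gives `α - k + m > b m`.
-/

open Finset

noncomputable def consecutiveRun (α : ℝ) (s : ℕ) : Finset ℝ :=
  (range s).image fun m : ℕ => α - s + 1 + m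

lemma bounds_of_mem_consecutiveRun {α x : ℝ} {s : ℕ} (hx : x ∈ consecutiveRun α s) :
    α - s + 1 ≤ x ∧ x ≤ α := by
  obtain ⟨m, hm, rfl⟩ := mem_image.1 hx
  have : (m : ℝ) + 1 ≤ s := by exact_mod_cast mem_range.1 hm
  constructor <;> linarith [(m.cast_nonneg : (0 : ℝ) ≤ m)]

lemma top_mem_consecutiveRun (α : ℝ) {s : ℕ} (hs : 0 < s) : α ∈ consecutiveRun α s :=
  mem_image.2 ⟨s - 1, mem_range.2 (by omega), by rw [Nat.cast_sub hs]; push_cast; ring⟩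

lemma add_one_le_of_lt_of_sub_eq_intCast {x y : ℝ} {n : ℤ} (hxy : x < y) (h : y - x = n) :
    x + 1 ≤ y := by
  have hn : (0 : ℝ) < n := h ▸ sub_pos.2 hxy
  have : (1 : ℝ) ≤ n := by exact_mod_cast (Int.cast_pos.1 hn : 0 < n)
  linarith

lemma natCast_sub_le_sub_of_add_one_le_succ {t : ℕ} {c : ℕ → ℝ}
    (hstep : ∀ i, 1 ≤ i → i < t → c i + 1 ≤ c (i + 1)) {i j : ℕ}
    (hi : 1 ≤ i) (hij : i ≤ j) (hj : j ≤ t) : (j - i : ℝ) ≤ c j - c i := by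
  induction j, hij using Nat.le_induction with
  | base => simp
  | succ j hij ih =>
    have := hstep j (by omega) (by omega)
    have := ih (by omega)
    push_cast
    linarith

section ConsecutiveRun

variable {J : Finset ℕ} {f : ℕ → ℝ} {α : ℝ} {s k : ℕ}

lemma bounds_of_image_eq_consecutiveRun
    (hrun : J.image (fun i => f i + 1) = consecutiveRun α s) {i : ℕ} (hi : i ∈ J) :
    α - s ≤ f i ∧ f i ≤ α - 1 := by
  have := bounds_of_mem_consecutiveRun (hrun ▸ mem_image_of_mem _ hi)
  constructor <;> linarith

lemma apply_max_eq_of_image_eq_consecutiveRun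
    (hgap : ∀ i ∈ J, ∀ j ∈ J, i ≤ j → (j - i : ℝ) ≤ f j - f i) (hs : s = J.card)
    (hrun : J.image (fun i => f i + 1) = consecutiveRun α s)
    (hkJ : k ∈ J) (hkmax : ∀ i ∈ J, i ≤ k) :
    f k = α - 1 := by
  have hαmem := top_mem_consecutiveRun α (hs ▸ card_pos.2 ⟨k, hkJ⟩)
  obtain ⟨j, hjJ, hj⟩ := mem_image.1 (hrun ▸ hαmem)
  have hjk := hgap j hjJ k hkJ (hkmax j hjJ)
  have : (0 : ℝ) ≤ k - j := sub_nonneg.2 (by exact_mod_cast hkmax j hjJ)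
  linarith [(bounds_of_image_eq_consecutiveRun hrun hkJ).2]

lemma eq_Icc_of_image_eq_consecutiveRun
    (hgap : ∀ i ∈ J, ∀ j ∈ J, i ≤ j → (j - i : ℝ) ≤ f j - f i) (hs : s = J.card)
    (hrun : J.image (fun i => f i + 1) = consecutiveRun α s) (h₀ : 0 ∉ J)
    (hkJ : k ∈ J) (hkmax : ∀ i ∈ J, i ≤ k) :
    J = Icc (k - s + 1) k := by
  have hfk := apply_max_eq_of_image_eq_consecutiveRun hgap hs hrun hkJ hkmax
  have hsub : J ⊆ Icc (k - s + 1) k := by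
    intro i hi
    have hki := hgap i hi k hkJ (hkmax i hi)
    have := (bounds_of_image_eq_consecutiveRun hrun hi).1
    have : k + 1 ≤ i + s := by exact_mod_cast (by linarith : (k : ℝ) + 1 ≤ i + s)
    have : i ≠ 0 := fun h => h₀ (h ▸ hi)
    exact mem_Icc.2 ⟨by omega, hkmax i hi⟩
  exact eq_of_subset_of_card_le hsub (by rw [Nat.card_Icc, ← hs]; omega)

lemma apply_eq_of_image_eq_consecutiveRun
    (hgap : ∀ i ∈ J, ∀ j ∈ J, i ≤ j → (j - i : ℝ) ≤ f j - f i) (hs : s = J.card)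
    (hrun : J.image (fun i => f i + 1) = consecutiveRun α s) (h₀ : 0 ∉ J)
    (hkJ : k ∈ J) (hkmax : ∀ i ∈ J, i ≤ k) :
    ∀ i ∈ J, f i = α - k + i - 1 := by
  have hfk := apply_max_eq_of_image_eq_consecutiveRun hgap hs hrun hkJ hkmax
  have hJ := eq_Icc_of_image_eq_consecutiveRun hgap hs hrun h₀ hkJ hkmax
  have hs₀ : 0 < s := hs ▸ card_pos.2 ⟨k, hkJ⟩
  have hsk : s ≤ k := by
    rw [hJ, Nat.card_Icc] at hs
    omega
  have hi₀J : k - s + 1 ∈ J := hJ ▸ left_mem_Icc.2 (by omega)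
  have hi₀ : ((k - s + 1 : ℕ) : ℝ) = k - s + 1 := by push_cast [Nat.cast_sub hsk]; ring
  have hfi₀ := (bounds_of_image_eq_consecutiveRun hrun hi₀J).1
  intro i hi
  have hi₀i := hgap _ hi₀J i hi (mem_Icc.1 (hJ ▸ hi)).1
  have hik := hgap i hi k hkJ (hkmax i hi)
  linarith

end ConsecutiveRun

lemma isLeast_of_residual_eq_zero_below {b c : ℕ → ℝ} {β : ℝ} {i₀ : ℕ} (hi₀ : 1 ≤ i₀)
    (hci₀ : c i₀ = β + i₀ - 1) (hbi₀ : c i₀ + 1 ≤ b i₀)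
    (hbelow : ∀ m, 1 ≤ m → m < i₀ → b m ≤ c m)
    (hgap : ∀ m, 1 ≤ m → m < i₀ → (i₀ - m : ℝ) ≤ c i₀ - c m) :
    IsLeast {i : ℕ | 1 ≤ i ∧ β + i ≤ b i} i₀ := by
  refine ⟨⟨hi₀, by linarith⟩, fun m ⟨hm, hmb⟩ => ?_⟩
  by_contra! hmi
  linarith [hbelow m hm hmi, hgap m hm hmi]

theorem residual_run_structure_general (t : ℕ) (a b : ℕ → ℝ)
    (hint_aa : ∀ i j, 1 ≤ i → i ≤ t → 1 ≤ j → j ≤ t → ∃ n : ℤ, a i - a j = (n : ℝ))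
    (hint_ab : ∀ i j, 1 ≤ i → i ≤ t → 1 ≤ j → j ≤ t → ∃ n : ℤ, a i - b j = (n : ℝ))
    (α : ℝ)
    (c : ℕ → ℝ)
    (hcmono : ∀ i j, 1 ≤ i → i < j → j ≤ t → c i < c j)
    (hc : ∀ i, 1 ≤ i → i ≤ t → a i - 1 ≤ c i ∧ c i ≤ b i ∧ ∃ n : ℤ, c i - a i = (n : ℝ))
    (J : Finset ℕ) (hJ : J = (Finset.Icc 1 t).filter (fun i => c i < b i))
    (s : ℕ) (hs : s = J.card)
    (hrun : J.image (fun i => c i + 1) =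
      (Finset.range s).image (fun m : ℕ => α - (s : ℝ) + 1 + (m : ℝ)))
    (k : ℕ) (hkJ : k ∈ J) (hkmax : ∀ i ∈ J, i ≤ k) :
    J = Finset.Icc (k - s + 1) k ∧
    (∀ i ∈ J, c i = α - (k : ℝ) + (i : ℝ) - 1) ∧
    (a k ≤ α ∧ α ≤ b k) ∧
    k - s + 1 = sInf {i : ℕ | 1 ≤ i ∧ α - (k : ℝ) + (i : ℝ) ≤ b i} := by
  have hmemJ : ∀ i, i ∈ J ↔ (1 ≤ i ∧ i ≤ t) ∧ c i < b i := by simp [hJ]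
  have hstep : ∀ i, 1 ≤ i → i < t → c i + 1 ≤ c (i + 1) := by
    intro i hi hit
    obtain ⟨m, hm⟩ := (hc i hi hit.le).2.2
    obtain ⟨n, hn⟩ := (hc (i + 1) (by omega) hit).2.2
    obtain ⟨p, hp⟩ := hint_aa (i + 1) i (by omega) hit hi hit.le
    exact add_one_le_of_lt_of_sub_eq_intCast (n := n - m + p)
      (hcmono i (i + 1) hi (by omega) hit) (by push_cast; linarith)
  have hresidual : ∀ i ∈ J, c i + 1 ≤ b i := by
    intro i hi
    obtain ⟨⟨hi1, hit⟩, hcb⟩ := (hmemJ i).1 hi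
    obtain ⟨m, hm⟩ := (hc i hi1 hit).2.2
    obtain ⟨n, hn⟩ := hint_ab i i hi1 hit hi1 hit
    exact add_one_le_of_lt_of_sub_eq_intCast (n := -n - m) hcb (by push_cast; linarith)
  have hgap : ∀ i ∈ J, ∀ j ∈ J, i ≤ j → (j - i : ℝ) ≤ c j - c i := fun i hi j hj hij =>
    natCast_sub_le_sub_of_add_one_le_succ hstep ((hmemJ i).1 hi).1.1 hij ((hmemJ j).1 hj).1.2
  have h₀ : 0 ∉ J := fun h => by simpa using ((hmemJ 0).1 h).1.1
  have hJeq := eq_Icc_of_image_eq_consecutiveRun hgap hs hrun h₀ hkJ hkmax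
  have hcJ := apply_eq_of_image_eq_consecutiveRun hgap hs hrun h₀ hkJ hkmax
  have hck := apply_max_eq_of_image_eq_consecutiveRun hgap hs hrun hkJ hkmax
  have hi₀J : k - s + 1 ∈ J := hJeq ▸ left_mem_Icc.2 (mem_Icc.1 (hJeq ▸ hkJ)).1
  obtain ⟨⟨hi₀, hi₀t⟩, -⟩ := (hmemJ _).1 hi₀J
  obtain ⟨⟨hk, hkt⟩, -⟩ := (hmemJ k).1 hkJ
  refine ⟨hJeq, hcJ, ⟨by linarith [(hc k hk hkt).1], by linarith [hresidual k hkJ]⟩,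
    (IsLeast.csInf_eq ?_).symm⟩
  refine isLeast_of_residual_eq_zero_below hi₀ (hcJ _ hi₀J) (hresidual _ hi₀J) ?_
    fun m hm hmi => natCast_sub_le_sub_of_add_one_le_succ hstep hm hmi.le hi₀t
  intro m hm hmi
  have hmJ : m ∉ J := by rw [hJeq, mem_Icc]; omega
  exact not_lt.1 fun hcb => hmJ ((hmemJ m).2 ⟨⟨hm, by omega⟩, hcb⟩)

/-- if the left endpoints `c i + 1` of the nonempty residual segments
(indices `i ∈ J`, `J = {i : c i < b i}` nonempty of cardinality `s`) form the consecutive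
run `{α - s + 1, …, α}`, then with `k = max J`: `J = {k - s + 1, …, k}`,
`c i = α - k + i - 1` on `J`, `a k ≤ α ≤ b k`, and `k - s + 1` is the least index `i` with
`α - k + i ≤ b i`. -/
theorem residual_run_structure (t : ℕ) (ht : 0 < t) (a b : ℕ → ℝ)
    (hamono : ∀ i j, 1 ≤ i → i < j → j ≤ t → a i < a j)
    (hbmono : ∀ i j, 1 ≤ i → i < j → j ≤ t → b i < b j)
    (hab : ∀ i, 1 ≤ i → i ≤ t → a i ≤ b i)
    (hint_aa : ∀ i j, 1 ≤ i → i ≤ t → 1 ≤ j → j ≤ t → ∃ n : ℤ, a i - a j = (n : ℝ))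
    (hint_bb : ∀ i j, 1 ≤ i → i ≤ t → 1 ≤ j → j ≤ t → ∃ n : ℤ, b i - b j = (n : ℝ))
    (hint_ab : ∀ i j, 1 ≤ i → i ≤ t → 1 ≤ j → j ≤ t → ∃ n : ℤ, a i - b j = (n : ℝ))
    (ha1 : (1/2 : ℝ) ≤ a 1)
    (α : ℝ) (hα : ∃ n : ℤ, α - a 1 = (n : ℝ))
    (c : ℕ → ℝ)
    (hcmono : ∀ i j, 1 ≤ i → i < j → j ≤ t → c i < c j)
    (hc : ∀ i, 1 ≤ i → i ≤ t → a i - 1 ≤ c i ∧ c i ≤ b i ∧ ∃ n : ℤ, c i - a i = (n : ℝ))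
    (J : Finset ℕ) (hJ : J = (Finset.Icc 1 t).filter (fun i => c i < b i))
    (hJne : J.Nonempty)
    (s : ℕ) (hs : s = J.card)
    (hrun : J.image (fun i => c i + 1) =
      (Finset.range s).image (fun m : ℕ => α - (s : ℝ) + 1 + (m : ℝ)))
    (k : ℕ) (hkJ : k ∈ J) (hkmax : ∀ i ∈ J, i ≤ k) :
    J = Finset.Icc (k - s + 1) k ∧
    (∀ i ∈ J, c i = α - (k : ℝ) + (i : ℝ) - 1) ∧
    (a k ≤ α ∧ α ≤ b k) ∧
    k - s + 1 = sInf {i : ℕ | 1 ≤ i ∧ α - (k : ℝ) + (i : ℝ) ≤ b i} :=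
  residual_run_structure_general t a b hint_aa hint_ab α c hcmono hc J hJ s hs hrun k hkJ hkmax
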